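/- (Fenchel conjugate bound.) Let ε > 0, α > 0, k > 0, h > 0, z > k·h, V ≥ 0 and u ≥ 0. Set p = 1 + √(log(2·u/ε + 1)) and S̄ = 4·α·k·p² + √(4·α·(V + z))·p. Then for every S ≥ −h: u·S − φ(V + z + k·S, S) ≤ u·S̄ + ε·√(α·(V + z + k·S̄)). Equivalently, sup_{S ∈ [−h, ∞)} [u·S − Φ(V, S)] ≤ u·S̄ + ε·√(α·(V + z + k·S̄)), where Φ(V, S) = φ(V + z + k·S, S). -/
import Mathlib

/-- The imaginary error function, `erfi x = ∫ u in 0..x, exp (u²)`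
(the conventional erfi scaled by `√π / 2`). -/
noncomputable def erfi (x : ℝ) : ℝ := ∫ u in (0:ℝ)..x, Real.exp (u ^ 2)

/-- The potential function `φ(x, y) = ε·√(α·x)·(2·∫₀^{y/√(4αx)} erfi(u) du − 1)`. -/
noncomputable def phi (ε α x y : ℝ) : ℝ :=
  ε * Real.sqrt (α * x) *
    (2 * (∫ u in (0:ℝ)..(y / Real.sqrt (4 * α * x)), erfi u) - 1)

open Real intervalIntegral MeasureTheory

lemma erfi_continuous : Continuous erfi :=
  intervalIntegral.continuous_primitive
    (fun _ _ => (by continuity : Continuous fun t : ℝ => Real.exp (t ^ 2)).intervalIntegrable _ _) 0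

lemma erfi_nonneg {t : ℝ} (ht : 0 ≤ t) : 0 ≤ erfi t := by
  apply intervalIntegral.integral_nonneg ht
  intro u _; positivity

lemma erfi_nonpos {t : ℝ} (ht : t ≤ 0) : erfi t ≤ 0 := by
  have h : erfi t = -∫ u in t..(0:ℝ), Real.exp (u ^ 2) := by
    rw [erfi, intervalIntegral.integral_symm]
  rw [h, neg_nonpos]
  exact intervalIntegral.integral_nonneg ht (fun u _ => by positivity)

/-- `G(y) = ∫₀^y erfi ≥ 0`. -/
lemma G_nonneg (y : ℝ) : 0 ≤ ∫ u in (0:ℝ)..y, erfi u := by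
  rcases le_or_gt 0 y with hy | hy
  · exact intervalIntegral.integral_nonneg hy (fun u hu => erfi_nonneg hu.1)
  · have h : (∫ u in (0:ℝ)..y, erfi u) = -∫ u in y..(0:ℝ), erfi u := by
      rw [intervalIntegral.integral_symm]
    rw [h, le_neg, neg_zero]
    have h2 := intervalIntegral.integral_nonneg (le_of_lt hy)
      (f := fun u => -erfi u) (μ := MeasureTheory.volume)
      (fun u hu => by simpa using erfi_nonpos hu.2)
    rw [intervalIntegral.integral_neg] at h2
    linarith

lemma int_two_s_exp (t : ℝ) :
    ∫ s in (0:ℝ)..t, 2 * s * Real.exp (s ^ 2) = Real.exp (t ^ 2) - 1 := by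
  have h : ∀ s ∈ Set.uIcc (0:ℝ) t, HasDerivAt (fun v : ℝ => Real.exp (v ^ 2))
      (2 * s * Real.exp (s ^ 2)) s := by
    intro s _
    have h1 : HasDerivAt (fun v : ℝ => v ^ 2) (2 * s) s := by
      simpa using hasDerivAt_pow 2 s
    simpa [mul_comm] using h1.exp
  have := intervalIntegral.integral_eq_sub_of_hasDerivAt h
    (by apply Continuous.intervalIntegrable; continuity)
  simpa using this

lemma erfi_lb {t : ℝ} (ht : 0 ≤ t) : Real.exp (t ^ 2) - 1 ≤ 2 * t * erfi t := by
  rw [← int_two_s_exp t]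
  have h : (2 * t) * erfi t = ∫ s in (0:ℝ)..t, 2 * t * Real.exp (s ^ 2) := by
    rw [erfi, ← intervalIntegral.integral_const_mul]
  rw [h]
  apply intervalIntegral.integral_mono_on ht
  · apply Continuous.intervalIntegrable; continuity
  · apply Continuous.intervalIntegrable; continuity
  · intro s hs
    have := hs.1; have := hs.2
    nlinarith [Real.exp_pos (s ^ 2)]

lemma exp_quad' {x : ℝ} (hx : 0 ≤ x) : 1 + x + x ^ 2 / 2 ≤ Real.exp x := by
  have h := Real.sum_le_exp_of_nonneg hx 3
  simp [Finset.sum_range_succ, Nat.factorial] at h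
  convert h using 1 <;> ring

lemma poly_int (t : ℝ) :
    ∫ s in (0:ℝ)..t, (1 + s ^ 2 + s ^ 4 / 2) = t + t ^ 3 / 3 + t ^ 5 / 10 := by
  have h : ∀ s ∈ Set.uIcc (0:ℝ) t, HasDerivAt (fun v : ℝ => v + v ^ 3 / 3 + v ^ 5 / 10)
      (1 + s ^ 2 + s ^ 4 / 2) s := by
    intro s _
    have h1 : HasDerivAt (fun v : ℝ => v + v ^ 3 / 3 + v ^ 5 / 10)
        (1 + (↑(3:ℕ) * s ^ 2) / 3 + (↑(5:ℕ) * s ^ 4) / 10) s :=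
      ((hasDerivAt_id s).add ((hasDerivAt_pow 3 s).div_const 3)).add
        ((hasDerivAt_pow 5 s).div_const 10)
    convert h1 using 1; push_cast; ring
  have := intervalIntegral.integral_eq_sub_of_hasDerivAt h
    (by apply Continuous.intervalIntegrable; continuity)
  simpa using this

lemma erfi_poly_lb {t : ℝ} (ht : 0 ≤ t) : t + t ^ 3 / 3 + t ^ 5 / 10 ≤ erfi t := by
  rw [← poly_int t, erfi]
  apply intervalIntegral.integral_mono_on ht
  · apply Continuous.intervalIntegrable; continuity
  · apply Continuous.intervalIntegrable; continuity
  · intro s _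
    have h := exp_quad' (x := s ^ 2) (by positivity)
    nlinarith [h]

lemma G1_lb : (3:ℝ)/5 ≤ ∫ u in (0:ℝ)..1, erfi u := by
  have h : ∫ t in (0:ℝ)..1, (t + t ^ 3 / 3 + t ^ 5 / 10) ≤ ∫ u in (0:ℝ)..1, erfi u := by
    apply intervalIntegral.integral_mono_on zero_le_one
    · apply Continuous.intervalIntegrable; continuity
    · exact erfi_continuous.intervalIntegrable _ _
    · exact fun t htt => erfi_poly_lb htt.1
  have h2 : ∫ t in (0:ℝ)..1, (t + t ^ 3 / 3 + t ^ 5 / 10) = (3:ℝ)/5 := by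
    have h3 : ∀ s ∈ Set.uIcc (0:ℝ) 1, HasDerivAt
        (fun v : ℝ => v ^ 2 / 2 + v ^ 4 / 12 + v ^ 6 / 60)
        (s + s ^ 3 / 3 + s ^ 5 / 10) s := by
      intro s _
      have h1 : HasDerivAt (fun v : ℝ => v ^ 2 / 2 + v ^ 4 / 12 + v ^ 6 / 60)
          ((↑(2:ℕ) * s ^ 1) / 2 + (↑(4:ℕ) * s ^ 3) / 12 + (↑(6:ℕ) * s ^ 5) / 60) s :=
        (((hasDerivAt_pow 2 s).div_const 2).add ((hasDerivAt_pow 4 s).div_const 12)).add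
          ((hasDerivAt_pow 6 s).div_const 60)
      convert h1 using 1; push_cast; ring
    have := intervalIntegral.integral_eq_sub_of_hasDerivAt h3
      (by apply Continuous.intervalIntegrable; continuity)
    rw [this]; norm_num
  linarith

lemma G_lb {w : ℝ} (hw : 1 ≤ w) :
    Real.exp (w ^ 2) / (4 * w ^ 2) - Real.exp 1 / 4 + 3/5 ≤ ∫ u in (0:ℝ)..w, erfi u := by
  have hsplit : (∫ u in (0:ℝ)..1, erfi u) + (∫ u in (1:ℝ)..w, erfi u)
      = ∫ u in (0:ℝ)..w, erfi u :=
    intervalIntegral.integral_add_adjacent_intervals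
      (erfi_continuous.intervalIntegrable _ _) (erfi_continuous.intervalIntegrable _ _)
  have hcont : ContinuousOn (fun t : ℝ => Real.exp (t ^ 2) * (t ^ 2 - 1) / (2 * t ^ 3))
      (Set.uIcc (1:ℝ) w) := by
    apply ContinuousOn.div
    · exact Continuous.continuousOn (by continuity)
    · exact Continuous.continuousOn (by continuity)
    · intro t htt
      rw [Set.uIcc_of_le hw] at htt
      have := htt.1; positivity
  have hftc : ∫ t in (1:ℝ)..w, Real.exp (t ^ 2) * (t ^ 2 - 1) / (2 * t ^ 3)
      = Real.exp (w ^ 2) / (4 * w ^ 2) - Real.exp 1 / 4 := by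
    have h3 : ∀ t ∈ Set.uIcc (1:ℝ) w, HasDerivAt
        (fun v : ℝ => Real.exp (v ^ 2) / (4 * v ^ 2))
        (Real.exp (t ^ 2) * (t ^ 2 - 1) / (2 * t ^ 3)) t := by
      intro t htt
      rw [Set.uIcc_of_le hw] at htt
      have ht1 : (1:ℝ) ≤ t := htt.1
      have hnum : HasDerivAt (fun v : ℝ => Real.exp (v ^ 2)) (2 * t * Real.exp (t ^ 2)) t := by
        have h1 : HasDerivAt (fun v : ℝ => v ^ 2) (2 * t) t := by simpa using hasDerivAt_pow 2 t
        simpa [mul_comm] using h1.exp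
      have hden : HasDerivAt (fun v : ℝ => 4 * v ^ 2) (4 * (2 * t)) t := by
        simpa using ((hasDerivAt_pow 2 t).const_mul 4)
      have hd : HasDerivAt (fun v : ℝ => Real.exp (v ^ 2) / (4 * v ^ 2))
          ((2 * t * Real.exp (t ^ 2) * (4 * t ^ 2) - Real.exp (t ^ 2) * (4 * (2 * t)))
            / (4 * t ^ 2) ^ 2) t :=
        hnum.div hden (by positivity)
      convert hd using 1
      have ht0 : t ≠ 0 := by linarith
      field_simp
      ring
    have := intervalIntegral.integral_eq_sub_of_hasDerivAt h3 (hcont.intervalIntegrable)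
    rw [this]; norm_num
  have hmono : ∫ t in (1:ℝ)..w, Real.exp (t ^ 2) * (t ^ 2 - 1) / (2 * t ^ 3)
      ≤ ∫ u in (1:ℝ)..w, erfi u := by
    apply intervalIntegral.integral_mono_on hw (hcont.intervalIntegrable)
      (erfi_continuous.intervalIntegrable _ _)
    intro t htt
    have ht1 : (1:ℝ) ≤ t := htt.1
    have ht0 : (0:ℝ) < t := by linarith
    rw [div_le_iff₀ (by positivity)]
    have h1 := erfi_lb (le_of_lt ht0)
    have h2 := Real.add_one_le_exp (t ^ 2)
    nlinarith [mul_le_mul_of_nonneg_left h1 (sq_nonneg t)]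
  have hG1 := G1_lb
  linarith

set_option maxHeartbeats 2000000 in
set_option maxRecDepth 8000 in
lemma keypoly (E a b : ℝ) (ha : 0 ≤ a) (hb : 0 ≤ b) (hE : 2 ≤ E) :
    (E - 2/5) * (1+a+b)^2 + 2*a^2*b*(1+a+b)*(2+2*a+b)
      ≤ E * ((1 + 2*a + 2*a^2 + 4/3*a^3 + 2/3*a^4)
          * (1 + (2*b+2*a*b+b^2) + (2*b+2*a*b+b^2)^2/2)) := by
  have hE2 : (0:ℝ) ≤ E - 2 := by linarith
  linarith [mul_nonneg (mul_nonneg hE2 (pow_nonneg ha 0)) (pow_nonneg hb 0),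
    mul_nonneg (pow_nonneg ha 0) (pow_nonneg hb 0),
    mul_nonneg (mul_nonneg hE2 (pow_nonneg ha 0)) (pow_nonneg hb 1),
    mul_nonneg (pow_nonneg ha 0) (pow_nonneg hb 1),
    mul_nonneg (mul_nonneg hE2 (pow_nonneg ha 0)) (pow_nonneg hb 2),
    mul_nonneg (pow_nonneg ha 0) (pow_nonneg hb 2),
    mul_nonneg (mul_nonneg hE2 (pow_nonneg ha 0)) (pow_nonneg hb 3),
    mul_nonneg (pow_nonneg ha 0) (pow_nonneg hb 3),
    mul_nonneg (mul_nonneg hE2 (pow_nonneg ha 0)) (pow_nonneg hb 4),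
    mul_nonneg (pow_nonneg ha 0) (pow_nonneg hb 4),
    mul_nonneg (mul_nonneg hE2 (pow_nonneg ha 1)) (pow_nonneg hb 0),
    mul_nonneg (pow_nonneg ha 1) (pow_nonneg hb 0),
    mul_nonneg (mul_nonneg hE2 (pow_nonneg ha 1)) (pow_nonneg hb 1),
    mul_nonneg (pow_nonneg ha 1) (pow_nonneg hb 1),
    mul_nonneg (mul_nonneg hE2 (pow_nonneg ha 1)) (pow_nonneg hb 2),
    mul_nonneg (pow_nonneg ha 1) (pow_nonneg hb 2),
    mul_nonneg (mul_nonneg hE2 (pow_nonneg ha 1)) (pow_nonneg hb 3),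
    mul_nonneg (pow_nonneg ha 1) (pow_nonneg hb 3),
    mul_nonneg (mul_nonneg hE2 (pow_nonneg ha 1)) (pow_nonneg hb 4),
    mul_nonneg (pow_nonneg ha 1) (pow_nonneg hb 4),
    mul_nonneg (mul_nonneg hE2 (pow_nonneg ha 2)) (pow_nonneg hb 0),
    mul_nonneg (pow_nonneg ha 2) (pow_nonneg hb 0),
    mul_nonneg (mul_nonneg hE2 (pow_nonneg ha 2)) (pow_nonneg hb 1),
    mul_nonneg (pow_nonneg ha 2) (pow_nonneg hb 1),
    mul_nonneg (mul_nonneg hE2 (pow_nonneg ha 2)) (pow_nonneg hb 2),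
    mul_nonneg (pow_nonneg ha 2) (pow_nonneg hb 2),
    mul_nonneg (mul_nonneg hE2 (pow_nonneg ha 2)) (pow_nonneg hb 3),
    mul_nonneg (pow_nonneg ha 2) (pow_nonneg hb 3),
    mul_nonneg (mul_nonneg hE2 (pow_nonneg ha 2)) (pow_nonneg hb 4),
    mul_nonneg (pow_nonneg ha 2) (pow_nonneg hb 4),
    mul_nonneg (mul_nonneg hE2 (pow_nonneg ha 3)) (pow_nonneg hb 0),
    mul_nonneg (pow_nonneg ha 3) (pow_nonneg hb 0),
    mul_nonneg (mul_nonneg hE2 (pow_nonneg ha 3)) (pow_nonneg hb 1),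
    mul_nonneg (pow_nonneg ha 3) (pow_nonneg hb 1),
    mul_nonneg (mul_nonneg hE2 (pow_nonneg ha 3)) (pow_nonneg hb 2),
    mul_nonneg (pow_nonneg ha 3) (pow_nonneg hb 2),
    mul_nonneg (mul_nonneg hE2 (pow_nonneg ha 3)) (pow_nonneg hb 3),
    mul_nonneg (pow_nonneg ha 3) (pow_nonneg hb 3),
    mul_nonneg (mul_nonneg hE2 (pow_nonneg ha 3)) (pow_nonneg hb 4),
    mul_nonneg (pow_nonneg ha 3) (pow_nonneg hb 4),
    mul_nonneg (mul_nonneg hE2 (pow_nonneg ha 4)) (pow_nonneg hb 0),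
    mul_nonneg (pow_nonneg ha 4) (pow_nonneg hb 0),
    mul_nonneg (mul_nonneg hE2 (pow_nonneg ha 4)) (pow_nonneg hb 1),
    mul_nonneg (pow_nonneg ha 4) (pow_nonneg hb 1),
    mul_nonneg (mul_nonneg hE2 (pow_nonneg ha 4)) (pow_nonneg hb 2),
    mul_nonneg (pow_nonneg ha 4) (pow_nonneg hb 2),
    mul_nonneg (mul_nonneg hE2 (pow_nonneg ha 4)) (pow_nonneg hb 3),
    mul_nonneg (pow_nonneg ha 4) (pow_nonneg hb 3),
    mul_nonneg (mul_nonneg hE2 (pow_nonneg ha 4)) (pow_nonneg hb 4),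
    mul_nonneg (pow_nonneg ha 4) (pow_nonneg hb 4),
    mul_nonneg (mul_nonneg hE2 (pow_nonneg ha 5)) (pow_nonneg hb 0),
    mul_nonneg (pow_nonneg ha 5) (pow_nonneg hb 0),
    mul_nonneg (mul_nonneg hE2 (pow_nonneg ha 5)) (pow_nonneg hb 1),
    mul_nonneg (pow_nonneg ha 5) (pow_nonneg hb 1),
    mul_nonneg (mul_nonneg hE2 (pow_nonneg ha 5)) (pow_nonneg hb 2),
    mul_nonneg (pow_nonneg ha 5) (pow_nonneg hb 2),
    mul_nonneg (mul_nonneg hE2 (pow_nonneg ha 5)) (pow_nonneg hb 3),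
    mul_nonneg (pow_nonneg ha 5) (pow_nonneg hb 3),
    mul_nonneg (mul_nonneg hE2 (pow_nonneg ha 5)) (pow_nonneg hb 4),
    mul_nonneg (pow_nonneg ha 5) (pow_nonneg hb 4),
    mul_nonneg (mul_nonneg hE2 (pow_nonneg ha 6)) (pow_nonneg hb 0),
    mul_nonneg (pow_nonneg ha 6) (pow_nonneg hb 0),
    mul_nonneg (mul_nonneg hE2 (pow_nonneg ha 6)) (pow_nonneg hb 1),
    mul_nonneg (pow_nonneg ha 6) (pow_nonneg hb 1),
    mul_nonneg (mul_nonneg hE2 (pow_nonneg ha 6)) (pow_nonneg hb 2),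
    mul_nonneg (pow_nonneg ha 6) (pow_nonneg hb 2),
    mul_nonneg (mul_nonneg hE2 (pow_nonneg ha 6)) (pow_nonneg hb 3),
    mul_nonneg (pow_nonneg ha 6) (pow_nonneg hb 3),
    mul_nonneg (mul_nonneg hE2 (pow_nonneg ha 6)) (pow_nonneg hb 4),
    mul_nonneg (pow_nonneg ha 6) (pow_nonneg hb 4)]

lemma exp_two_le : (2:ℝ) ≤ Real.exp 1 := by
  have := Real.exp_one_gt_d9; linarith

lemma exp_quartic {a : ℝ} (ha : 0 ≤ a) :
    1 + 2*a + 2*a^2 + 4/3*a^3 + 2/3*a^4 ≤ Real.exp (2*a) := by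
  have h := Real.sum_le_exp_of_nonneg (by linarith : (0:ℝ) ≤ 2*a) 5
  simp [Finset.sum_range_succ, Nat.factorial] at h
  convert h using 1; ring

lemma key_exp (a b : ℝ) (ha : 0 ≤ a) (hb : 0 ≤ b) :
    (Real.exp 1 - 2/5) * (1+a+b)^2 + 2*a^2*b*(1+a+b)*(2+2*a+b)
      ≤ Real.exp ((1+a+b)^2 - a^2) := by
  have hs : (0:ℝ) ≤ 2*b+2*a*b+b^2 := by positivity
  have hX : (1+a+b)^2 - a^2 = 1 + 2*a + (2*b+2*a*b+b^2) := by ring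
  rw [hX, Real.exp_add, Real.exp_add]
  have hP := exp_quartic ha
  have hQ := exp_quad' hs
  have hQn : (0:ℝ) ≤ 1 + (2*b+2*a*b+b^2) + (2*b+2*a*b+b^2)^2/2 := by positivity
  calc (Real.exp 1 - 2/5) * (1+a+b)^2 + 2*a^2*b*(1+a+b)*(2+2*a+b)
      ≤ Real.exp 1 * ((1 + 2*a + 2*a^2 + 4/3*a^3 + 2/3*a^4)
          * (1 + (2*b+2*a*b+b^2) + (2*b+2*a*b+b^2)^2/2)) :=
        keypoly _ a b ha hb exp_two_le
    _ ≤ Real.exp 1 * (Real.exp (2*a) * Real.exp (2*b+2*a*b+b^2)) := by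
        apply mul_le_mul_of_nonneg_left _ (le_of_lt (Real.exp_pos 1))
        exact mul_le_mul hP hQ hQn (le_of_lt (Real.exp_pos _))
    _ = Real.exp 1 * Real.exp (2*a) * Real.exp (2*b+2*a*b+b^2) := by ring

lemma core_main (M a b : ℝ) (ha : 0 ≤ a) (hb : 0 ≤ b)
    (hMa : M ≤ a ^ 2 * Real.exp (a ^ 2)) :
    2*(1+a+b)*(M*((1+a+b)^2 - (1+a)^2)) + (Real.exp 1 - 2/5)*(1+a+b)^2
      ≤ Real.exp ((1+a+b)^2) := by
  have hkey := key_exp a b ha hb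
  have hsplit : Real.exp ((1+a+b)^2) = Real.exp (a^2) * Real.exp ((1+a+b)^2 - a^2) := by
    rw [← Real.exp_add]; ring_nf
  have hmul := mul_le_mul_of_nonneg_left hkey (le_of_lt (Real.exp_pos (a^2)))
  rw [← hsplit] at hmul
  have h1 : 2*(1+a+b)*(M*((1+a+b)^2 - (1+a)^2))
      ≤ Real.exp (a^2) * (2*a^2*b*(1+a+b)*(2+2*a+b)) := by
    have hfac : (1+a+b)^2 - (1+a)^2 = b*(2+2*a+b) := by ring
    rw [hfac]
    have hw : (0:ℝ) ≤ 2*(1+a+b)*(b*(2+2*a+b)) := by positivity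
    calc 2*(1+a+b)*(M*(b*(2+2*a+b))) = M * (2*(1+a+b)*(b*(2+2*a+b))) := by ring
      _ ≤ (a^2 * Real.exp (a^2)) * (2*(1+a+b)*(b*(2+2*a+b))) :=
          mul_le_mul_of_nonneg_right hMa hw
      _ = Real.exp (a^2) * (2*a^2*b*(1+a+b)*(2+2*a+b)) := by ring
  have h2 : (Real.exp 1 - 2/5)*(1+a+b)^2
      ≤ Real.exp (a^2) * ((Real.exp 1 - 2/5)*(1+a+b)^2) := by
    have hEa : 1 ≤ Real.exp (a^2) := Real.one_le_exp (by positivity)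
    have hpos : (0:ℝ) ≤ (Real.exp 1 - 2/5)*(1+a+b)^2 := by
      have h3 := exp_two_le
      have : (0:ℝ) ≤ Real.exp 1 - 2/5 := by linarith
      positivity
    nlinarith
  nlinarith [hmul]

lemma fenchel_core (M w : ℝ) (hM : 0 ≤ M)
    (hw : 1 + Real.sqrt (Real.log (M+1)) ≤ w) :
    M*w^2 + (Real.exp 1/2 - 1/5)*w - Real.exp (w^2)/(2*w)
        ≤ M*(1+Real.sqrt (Real.log (M+1)))^2
    ∧ M*w + (Real.exp 1/2 - 1/5) - Real.exp (w^2)/(2*w^2)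
        ≤ M*(1+Real.sqrt (Real.log (M+1))) + 1 := by
  set a := Real.sqrt (Real.log (M+1)) with ha_def
  have ha : 0 ≤ a := Real.sqrt_nonneg _
  have hb : 0 ≤ w - (1+a) := by linarith
  have hw0 : (0:ℝ) < w := by linarith
  have hL : 0 ≤ Real.log (M+1) := Real.log_nonneg (by linarith)
  have ha2 : a^2 = Real.log (M+1) := Real.sq_sqrt hL
  have hMe : Real.exp (a^2) = M+1 := by rw [ha2, Real.exp_log]; linarith
  have hMa : M ≤ a^2 * Real.exp (a^2) := by
    have h := Real.add_one_le_exp (-(a^2))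
    have hprod : Real.exp (-(a^2)) * Real.exp (a^2) = 1 := by
      rw [← Real.exp_add]; simp
    nlinarith [Real.exp_pos (a^2), sq_nonneg a,
      mul_le_mul_of_nonneg_right h (le_of_lt (Real.exp_pos (a^2)))]
  have hcore := core_main M a (w - (1+a)) ha hb hMa
  have hwab : 1 + a + (w - (1+a)) = w := by ring
  rw [hwab] at hcore
  constructor
  · have h2 : M*w^2 + (Real.exp 1/2 - 1/5)*w - M*(1+a)^2 ≤ Real.exp (w^2)/(2*w) := by
      rw [le_div_iff₀ (by linarith : (0:ℝ) < 2*w)]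
      nlinarith [hcore]
    linarith
  · have h3 : M*w + (Real.exp 1/2 - 1/5) - 1 - M*(1+a) ≤ Real.exp (w^2)/(2*w^2) := by
      rw [le_div_iff₀ (by positivity : (0:ℝ) < 2*w^2)]
      have hMb : 0 ≤ M * (w - (1+a)) := mul_nonneg hM hb
      nlinarith [hcore, mul_le_mul_of_nonneg_right
        (by linarith : w ≤ w + (1+a)) (mul_nonneg (mul_nonneg (by linarith : (0:ℝ) ≤ 2*w) hM) hb)]
    linarith

set_option maxHeartbeats 1000000 in
/-- Fenchel conjugate bound: with `p = 1 + √(log(2u/ε + 1))` and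
`S̄ = 4αkp² + √(4α(V + z))·p`, for every `S ≥ −h`,
`u·S − Φ(V, S) ≤ u·S̄ + ε·√(α·(V + z + k·S̄))` where `Φ(V, S) = φ(V + z + kS, S)`. -/
theorem fenchel_conjugate_bound (ε α k h z V u : ℝ)
    (hε : 0 < ε) (hα : 0 < α) (hk : 0 < k) (hh : 0 < h) (hz : k * h < z)
    (hV : 0 ≤ V) (hu : 0 ≤ u) :
    ∀ S : ℝ, -h ≤ S →
      u * S - phi ε α (V + z + k * S) S ≤
        u * (4 * α * k * (1 + Real.sqrt (Real.log (2 * u / ε + 1))) ^ 2 +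
              Real.sqrt (4 * α * (V + z)) * (1 + Real.sqrt (Real.log (2 * u / ε + 1))))
          + ε * Real.sqrt (α * (V + z +
              k * (4 * α * k * (1 + Real.sqrt (Real.log (2 * u / ε + 1))) ^ 2 +
                Real.sqrt (4 * α * (V + z)) *
                  (1 + Real.sqrt (Real.log (2 * u / ε + 1)))))) := by
  intro S hS
  set p := 1 + Real.sqrt (Real.log (2 * u / ε + 1)) with hp_def
  have hp1 : 1 ≤ p := by
    rw [hp_def]
    have := Real.sqrt_nonneg (Real.log (2 * u / ε + 1)); linarith
  set A := Real.sqrt (α * (V + z)) with hA_def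
  have hA0 : 0 ≤ A := Real.sqrt_nonneg _
  have hVz : (0:ℝ) < V + z := by nlinarith
  have hA2 : A^2 = α * (V + z) := Real.sq_sqrt (by positivity)
  have hA4 : Real.sqrt (4 * α * (V + z)) = 2 * A := by
    rw [hA_def, show 4 * α * (V + z) = 2^2 * (α * (V + z)) by ring,
      Real.sqrt_mul (by positivity), Real.sqrt_sq (by norm_num)]
  rw [hA4]
  set Sb := 4 * α * k * p ^ 2 + 2 * A * p with hSb_def
  have hSb0 : 0 ≤ Sb := by positivity
  have hxb : (0:ℝ) ≤ α * (V + z + k * Sb) := by positivity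
  have hAxb : A ≤ Real.sqrt (α * (V + z + k * Sb)) := by
    rw [hA_def]
    apply Real.sqrt_le_sqrt
    nlinarith [mul_nonneg hα.le (mul_nonneg hk.le hSb0)]
  rcases le_or_gt S Sb with hcase | hcase
  · -- Case A : S ≤ Sb
    have hx0 : (0:ℝ) < V + z + k * S := by nlinarith
    have hphi_lb : -(ε * Real.sqrt (α * (V + z + k * S))) ≤ phi ε α (V + z + k * S) S := by
      rw [phi]
      have hG := G_nonneg (S / Real.sqrt (4 * α * (V + z + k * S)))
      have hq : (0:ℝ) ≤ Real.sqrt (α * (V + z + k * S)) := Real.sqrt_nonneg _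
      nlinarith [mul_nonneg (mul_nonneg hε.le hq) hG]
    have hsq_le : Real.sqrt (α * (V + z + k * S)) ≤ Real.sqrt (α * (V + z + k * Sb)) := by
      apply Real.sqrt_le_sqrt
      have hk1 : k * S ≤ k * Sb := mul_le_mul_of_nonneg_left hcase hk.le
      nlinarith [mul_le_mul_of_nonneg_left (show V + z + k * S ≤ V + z + k * Sb by linarith) hα.le]
    have huS : u * S ≤ u * Sb := mul_le_mul_of_nonneg_left hcase hu
    have hmul2 := mul_le_mul_of_nonneg_left hsq_le hε.le
    linarith
  · -- Case B : Sb < S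
    have hS0 : (0:ℝ) < S := lt_of_le_of_lt hSb0 hcase
    have hx0 : (0:ℝ) < V + z + k * S := by nlinarith
    set x := V + z + k * S with hx_def
    set q := Real.sqrt (α * x) with hq_def
    have hq0 : (0:ℝ) < q := Real.sqrt_pos.mpr (by positivity)
    have hq2 : q^2 = α * x := Real.sq_sqrt (by positivity)
    have h2q : Real.sqrt (4 * α * x) = 2 * q := by
      rw [hq_def, show 4 * α * x = 2^2 * (α * x) by ring,
        Real.sqrt_mul (by positivity), Real.sqrt_sq (by norm_num)]
    set w := S / (2 * q) with hw_def
    have hw0 : (0:ℝ) < w := by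
      rw [hw_def]; positivity
    have hSw : S = 2 * w * q := by
      rw [hw_def]; field_simp
    have hq_le : q ≤ 2 * α * k * w + A := by
      have hqq : q^2 = A^2 + 2 * α * k * w * q := by
        rw [hq2, hA2, hx_def, hSw]
        ring
      nlinarith [hqq, hA0, hq0.le, mul_pos hq0 hw0,
        mul_nonneg (mul_nonneg hα.le hk.le) (mul_nonneg hw0.le hA0)]
    set M := 2 * u / ε with hM_def
    have hM0 : 0 ≤ M := by positivity
    have hMu : ε * M = 2 * u := by
      rw [hM_def]; field_simp
    have hw_ge : p ≤ w := by
      by_contra hcon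
      push_neg at hcon
      have hq_lt : q < 2 * α * k * p + A := by
        nlinarith [hq_le, mul_lt_mul_of_pos_left hcon (by positivity : (0:ℝ) < 2*α*k)]
      have hp0 : (0:ℝ) < p := by linarith
      have : S < Sb := by
        rw [hSw, hSb_def]
        have f1 : w * q < p * q := mul_lt_mul_of_pos_right hcon hq0
        have f2 : 2*p*q < 2*p*(2 * α * k * p + A) :=
          mul_lt_mul_of_pos_left hq_lt (by positivity : (0:ℝ) < 2*p)
        nlinarith [f1, f2]
      linarith
    have hw1 : 1 ≤ w := le_trans hp1 hw_ge
    -- potential lower bound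
    have hphi_eq : phi ε α x S = ε * q * (2 * (∫ v in (0:ℝ)..w, erfi v) - 1) := by
      rw [phi, h2q, hq_def, hw_def]
    have hG := G_lb hw1
    have hcore := fenchel_core M w hM0 (by rw [hM_def]; exact hw_ge)
    rw [← hp_def] at hcore
    obtain ⟨hII, hI⟩ := hcore
    -- LHS ≤ ε q (M w + K − exp(w²)/(2w²))   with K = exp 1/2 − 1/5
    have hLHS : u * S - phi ε α x S
        ≤ ε * q * (M * w + (Real.exp 1/2 - 1/5) - Real.exp (w^2)/(2*w^2)) := by
      rw [hphi_eq]
      have hG2 : Real.exp (w^2)/(2*w^2) - (Real.exp 1/2 - 1/5)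
          ≤ 2 * (∫ v in (0:ℝ)..w, erfi v) - 1 := by
        have : Real.exp (w ^ 2) / (4 * w ^ 2) - Real.exp 1 / 4 + 3/5
            ≤ ∫ v in (0:ℝ)..w, erfi v := hG
        have hww : Real.exp (w^2)/(2*w^2) = 2 * (Real.exp (w^2)/(4*w^2)) := by
          field_simp; ring
        rw [hww]
        linarith
      have hmul := mul_le_mul_of_nonneg_left hG2
        (by positivity : (0:ℝ) ≤ ε * q)
      have huSq : u * S = ε * q * (M * w) := by
        rw [hSw]
        calc u * (2 * w * q) = (ε * M) * w * q / 2 * 2 / 2 * 2 := by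
              rw [hMu]; ring
          _ = ε * q * (M * w) := by ring
      rw [huSq]
      nlinarith [hmul]
    rcases le_or_gt (M * w + (Real.exp 1/2 - 1/5) - Real.exp (w^2)/(2*w^2)) 0 with hT | hT
    · -- slope nonpositive: LHS ≤ 0 ≤ RHS
      have hRHS0 : (0:ℝ) ≤ u * Sb + ε * Real.sqrt (α * (V + z + k * Sb)) := by
        have f1 : (0:ℝ) ≤ u * Sb := mul_nonneg hu hSb0
        have f2 : (0:ℝ) ≤ ε * Real.sqrt (α * (V + z + k * Sb)) :=
          mul_nonneg hε.le (Real.sqrt_nonneg _)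
        linarith
      have hT0 : ε * q * (M * w + (Real.exp 1/2 - 1/5) - Real.exp (w^2)/(2*w^2)) ≤ 0 :=
        mul_nonpos_of_nonneg_of_nonpos (by positivity) hT
      linarith
    · -- slope positive
      have hT' := le_of_lt hT
      have hstep1 : ε * q * (M * w + (Real.exp 1/2 - 1/5) - Real.exp (w^2)/(2*w^2))
          ≤ ε * (2 * α * k * w + A) * (M * w + (Real.exp 1/2 - 1/5) - Real.exp (w^2)/(2*w^2)) := by
        exact mul_le_mul_of_nonneg_right (mul_le_mul_of_nonneg_left hq_le hε.le) hT'
      have hwT : w * (M * w + (Real.exp 1/2 - 1/5) - Real.exp (w^2)/(2*w^2))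
          ≤ M * p^2 := by
        have hdiv : w * (Real.exp (w^2)/(2*w^2)) = Real.exp (w^2)/(2*w) := by
          field_simp
        linarith [hII, hdiv]
      have hstep2 : ε * (2 * α * k * w + A) * (M * w + (Real.exp 1/2 - 1/5) - Real.exp (w^2)/(2*w^2))
          ≤ ε * (2 * α * k * (M * p^2) + A * (M * p + 1)) := by
        have e1 : (0:ℝ) ≤ 2 * α * k := by positivity
        have h1 : 2 * α * k * (w * (M * w + (Real.exp 1/2 - 1/5) - Real.exp (w^2)/(2*w^2)))
            ≤ 2 * α * k * (M * p^2) := mul_le_mul_of_nonneg_left hwT e1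
        have h2 : A * (M * w + (Real.exp 1/2 - 1/5) - Real.exp (w^2)/(2*w^2))
            ≤ A * (M * p + 1) := mul_le_mul_of_nonneg_left hI hA0
        have := mul_le_mul_of_nonneg_left (add_le_add h1 h2) (le_of_lt hε)
        calc ε * (2 * α * k * w + A) * (M * w + (Real.exp 1/2 - 1/5) - Real.exp (w^2)/(2*w^2))
            = ε * (2 * α * k * (w * (M * w + (Real.exp 1/2 - 1/5) - Real.exp (w^2)/(2*w^2)))
              + A * (M * w + (Real.exp 1/2 - 1/5) - Real.exp (w^2)/(2*w^2))) := by ring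
          _ ≤ ε * (2 * α * k * (M * p^2) + A * (M * p + 1)) := this
      have hfinal : ε * (2 * α * k * (M * p^2) + A * (M * p + 1))
          ≤ u * Sb + ε * Real.sqrt (α * (V + z + k * Sb)) := by
        have h1 : ε * (2 * α * k * (M * p^2)) = u * (4 * α * k * p^2) := by
          calc ε * (2 * α * k * (M * p^2)) = (ε * M) * (2 * α * k * p^2) := by ring
            _ = 2 * u * (2 * α * k * p^2) := by rw [hMu]
            _ = u * (4 * α * k * p^2) := by ring
        have h2 : ε * (A * (M * p)) = u * (2 * A * p) := by
          calc ε * (A * (M * p)) = (ε * M) * (A * p) := by ring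
            _ = 2 * u * (A * p) := by rw [hMu]
            _ = u * (2 * A * p) := by ring
        have h3 : ε * A ≤ ε * Real.sqrt (α * (V + z + k * Sb)) :=
          mul_le_mul_of_nonneg_left hAxb (le_of_lt hε)
        have : ε * (2 * α * k * (M * p^2) + A * (M * p + 1))
            = u * (4 * α * k * p^2) + u * (2 * A * p) + ε * A := by
          rw [← h1, ← h2]; ring
        rw [this, hSb_def]
        have : u * (4 * α * k * p ^ 2 + 2 * A * p)
            = u * (4 * α * k * p^2) + u * (2 * A * p) := by ring
        rw [this]
        linarith
      calc u * S - phi ε α x S ≤ _ := hLHS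
        _ ≤ _ := hstep1
        _ ≤ _ := hstep2
        _ ≤ _ := hfinal
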